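/- Let x ∈ ∂D and let z ∈ ℝ^n satisfy W̄(S)·z ≥ 0 for every S ∈ S(x). Then z ∈ T_D(x). -/

import Mathlib

/-- A feedforward ReLU network with `L` layers. `d 0` is the input dimension `n`;
`d i` is the width `M_i` of layer `i` for `1 ≤ i ≤ L`. `W i j : Fin (d i) → ℝ` is the
weight vector of neuron `j` in layer `i+1` (paper layer `i+1`), `r i j` its bias,
`Ω` the output weights and `ψ` the output bias. -/
structure ReluNet where
  L : ℕ
  hL : 1 ≤ L
  d : ℕ → ℕ
  W : (i : ℕ) → Fin (d (i + 1)) → Fin (d i) → ℝ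
  r : (i : ℕ) → Fin (d (i + 1)) → ℝ
  Ω : Fin (d L) → ℝ
  ψ : ℝ

namespace ReluNet

open Classical

/-- Layer outputs: `z N i x` is the output vector of paper layer `i` (`z N 0 x = x`). -/
def z (N : ReluNet) : (i : ℕ) → (Fin (N.d 0) → ℝ) → Fin (N.d i) → ℝ
  | 0, x => x
  | i + 1, x => fun j => max 0 ((∑ k, N.W i j k * z N i x k) + N.r i j)

/-- Pre-activation input of neuron `(i+1, j)` (paper indexing) at input `x`. -/
def pre (N : ReluNet) (i : ℕ) (j : Fin (N.d (i + 1))) (x : Fin (N.d 0) → ℝ) : ℝ :=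
  (∑ k, N.W i j k * N.z i x k) + N.r i j

/-- The network output `b(x) = Ω ⬝ z_L(x) + ψ`. -/
def b (N : ReluNet) (x : Fin (N.d 0) → ℝ) : ℝ :=
  (∑ j, N.Ω j * N.z N.L x j) + N.ψ

/-- An activation set: a set of neurons in each layer (`S i` lives in paper layer `i+1`). -/
abbrev ActSet (N : ReluNet) := (i : ℕ) → Set (Fin (N.d (i + 1)))

/-- The activation region `X̄(S)`: inputs whose pre-activation at neuron `(i,j)` is `≥ 0`
for `j ∈ S_i` and `≤ 0` for `j ∉ S_i`. -/
def region (N : ReluNet) (S : N.ActSet) : Set (Fin (N.d 0) → ℝ) :=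
  {x | ∀ i < N.L, ∀ j : Fin (N.d (i + 1)),
      (j ∈ S i → 0 ≤ N.pre i j x) ∧ (j ∉ S i → N.pre i j x ≤ 0)}

/-- `Wbar N S i j` is the column `W̄_{ij}(S) ∈ ℝ^n` (paper layer `i`); `Wbar N S 0` is the
identity matrix convention `W̄_0(S) = I`. -/
noncomputable def Wbar (N : ReluNet) (S : N.ActSet) : (i : ℕ) → Fin (N.d i) → Fin (N.d 0) → ℝ
  | 0, j => fun k => if k = j then 1 else 0
  | i + 1, j =>
      if j ∈ S i then (fun k => ∑ j', N.W i j j' * Wbar N S i j' k) else 0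

/-- `rbar N S i j` is `r̄_{ij}(S)` (paper layer `i`); `rbar N S 0 = 0` by convention. -/
noncomputable def rbar (N : ReluNet) (S : N.ActSet) : (i : ℕ) → Fin (N.d i) → ℝ
  | 0, _ => 0
  | i + 1, j =>
      if j ∈ S i then (∑ j', N.W i j j' * rbar N S i j') + N.r i j else 0

/-- `W̄(S) = W̄_L(S) Ω ∈ ℝ^n`. -/
noncomputable def WbarOut (N : ReluNet) (S : N.ActSet) : Fin (N.d 0) → ℝ :=
  fun k => ∑ j, N.Ω j * N.Wbar S N.L j k

/-- `r̄(S) = Ω ⬝ r̄_L(S) + ψ`. -/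
noncomputable def rbarOut (N : ReluNet) (S : N.ActSet) : ℝ :=
  (∑ j, N.Ω j * N.rbar S N.L j) + N.ψ

/-- `gradW N S i j = W̄_i(S) W_{(i+1)j} ∈ ℝ^n` (paper: `W̄_{i-1}(S) W_{ij}` for neuron
`(i,j)` with `i = ` my `i+1`). -/
noncomputable def gradW (N : ReluNet) (S : N.ActSet) (i : ℕ) (j : Fin (N.d (i + 1))) :
    Fin (N.d 0) → ℝ :=
  fun k => ∑ j', N.W i j j' * N.Wbar S i j' k

end ReluNet

/-- Euclidean distance from a point to a set in `ℝ^n` (it is `0` for the empty set,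
matching the convention of `Metric.infDist`). -/
noncomputable def eInfDist {n : ℕ} (x : Fin n → ℝ) (A : Set (Fin n → ℝ)) : ℝ :=
  sInf ((fun y => Real.sqrt (∑ k, (x k - y k) ^ 2)) '' A)

/-- The tangent cone `T_A(x) = {z : liminf_{τ→0⁺} dist(x + τz, A)/τ = 0}`, with `dist`
the Euclidean distance from a point to a set. -/
noncomputable def tangentCone {n : ℕ} (A : Set (Fin n → ℝ)) (x : Fin n → ℝ) :
    Set (Fin n → ℝ) :=
  {z | Filter.liminf (fun τ : ℝ => eInfDist (x + τ • z) A / τ)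
        (nhdsWithin 0 (Set.Ioi 0)) = 0}

/-
Along the ray `τ ↦ x + τ • z` only finitely many activation patterns occur, so one of them, `S`,
occurs for arbitrarily small `τ > 0`. Activation regions are closed, hence `x ∈ X̄(S)` as well,
and `b` is affine on `X̄(S)` with gradient `W̄(S)`. For those `τ` we get
`b (x + τ • z) = b x + τ * W̄(S) ⬝ᵥ z ≥ 0`, using `b x ≥ 0` since `D` is closed, so the ray
meets `D` for arbitrarily small `τ > 0` and the liminf in the tangent cone is `0`.
-/

open Filter Topology

namespace ReluNet

variable (N : ReluNet)

theorem continuous_z (i : ℕ) : Continuous (N.z i) := by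
  induction i with
  | zero => exact continuous_id
  | succ i ih =>
    refine continuous_pi fun j => continuous_const.max ?_
    exact (continuous_finsetSum _ fun k _ =>
      continuous_const.mul ((continuous_apply k).comp ih)).add continuous_const

theorem continuous_pre (i : ℕ) (j : Fin (N.d (i + 1))) : Continuous (N.pre i j) :=
  (continuous_finsetSum _ fun k _ =>
    continuous_const.mul ((continuous_apply k).comp (N.continuous_z i))).add continuous_const

theorem continuous_b : Continuous N.b :=
  (continuous_finsetSum _ fun k _ =>
    continuous_const.mul ((continuous_apply k).comp (N.continuous_z N.L))).add continuous_const

theorem isClosed_region (S : N.ActSet) : IsClosed (N.region S) := by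
  simp only [region, Set.ofPred_forall]
  refine isClosed_iInter fun i => isClosed_iInter fun _ => isClosed_iInter fun j => ?_
  by_cases hj : j ∈ S i
  · simpa [hj] using isClosed_le continuous_const (N.continuous_pre i j)
  · simpa [hj] using isClosed_le (N.continuous_pre i j) continuous_const

def activationPattern (y : Fin (N.d 0) → ℝ) : (i : Fin N.L) → Set (Fin (N.d (i.1 + 1))) :=
  fun i => {j | 0 ≤ N.pre i j y}

def ActSet.ofPattern (T : (i : Fin N.L) → Set (Fin (N.d (i.1 + 1)))) : N.ActSet :=
  fun i => if h : i < N.L then T ⟨i, h⟩ else ∅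

theorem mem_region_ofPattern_activationPattern (y : Fin (N.d 0) → ℝ) :
    y ∈ N.region (ActSet.ofPattern N (N.activationPattern y)) := by
  intro i hi j
  simp only [ActSet.ofPattern, dif_pos hi, activationPattern, Set.mem_ofPred_eq, not_le]
  exact ⟨id, le_of_lt⟩

/-- Pigeonhole over the finitely many activation patterns. -/
theorem exists_frequently_mem_region {α : Type*} (l : Filter α) [l.NeBot]
    (u : α → Fin (N.d 0) → ℝ) : ∃ S : N.ActSet, ∃ᶠ a in l, u a ∈ N.region S := by
  obtain ⟨T, hT⟩ : ∃ T, ∃ᶠ a in l, N.activationPattern (u a) = T :=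
    frequently_exists.mp (Eventually.of_forall fun a => ⟨_, rfl⟩).frequently
  exact ⟨ActSet.ofPattern N T,
    hT.mono fun a ha => ha ▸ N.mem_region_ofPattern_activationPattern (u a)⟩

theorem z_eq_of_mem_region {S : N.ActSet} {y : Fin (N.d 0) → ℝ} (hy : y ∈ N.region S) :
    ∀ i ≤ N.L, ∀ j, N.z i y j = Wbar N S i j ⬝ᵥ y + rbar N S i j := by
  intro i
  induction i with
  | zero => intro _ j; simp [z, Wbar, rbar, dotProduct, ite_mul]
  | succ i ih =>
    intro hiL j
    have hi : i < N.L := hiL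
    have hpre :
        N.pre i j y = N.gradW S i j ⬝ᵥ y + (∑ j', N.W i j j' * rbar N S i j' + N.r i j) := by
      simp only [pre, gradW, dotProduct, ih hi.le, mul_add, Finset.mul_sum, Finset.sum_add_distrib,
        Finset.sum_mul, mul_assoc, add_assoc]
      rw [Finset.sum_comm]
    have hz : N.z (i + 1) y j = max 0 (N.pre i j y) := rfl
    by_cases hj : j ∈ S i
    · rw [hz, max_eq_right ((hy i hi j).1 hj), hpre]
      simp only [Wbar, rbar, if_pos hj]
      rfl
    · rw [hz, max_eq_left ((hy i hi j).2 hj)]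
      simp [Wbar, rbar, if_neg hj]

theorem b_eq_of_mem_region {S : N.ActSet} {y : Fin (N.d 0) → ℝ} (hy : y ∈ N.region S) :
    N.b y = N.WbarOut S ⬝ᵥ y + N.rbarOut S := by
  simp only [b, WbarOut, rbarOut, dotProduct, N.z_eq_of_mem_region hy N.L le_rfl, mul_add,
    Finset.mul_sum, Finset.sum_add_distrib, Finset.sum_mul, mul_assoc, add_assoc]
  rw [Finset.sum_comm]

theorem b_add_smul_of_mem_region {S : N.ActSet} {x z : Fin (N.d 0) → ℝ} (τ : ℝ)
    (hx : x ∈ N.region S) (hxz : x + τ • z ∈ N.region S) :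
    N.b (x + τ • z) = N.b x + τ * N.WbarOut S ⬝ᵥ z := by
  rw [N.b_eq_of_mem_region hx, N.b_eq_of_mem_region hxz, dotProduct_add, dotProduct_smul,
    smul_eq_mul]
  ring

end ReluNet

theorem eInfDist_nonneg {n : ℕ} (y : Fin n → ℝ) (A : Set (Fin n → ℝ)) : 0 ≤ eInfDist y A :=
  Real.sInf_nonneg fun _ ⟨_, _, h⟩ => h ▸ Real.sqrt_nonneg _

theorem eInfDist_eq_zero_of_mem {n : ℕ} {y : Fin n → ℝ} {A : Set (Fin n → ℝ)} (hy : y ∈ A) :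
    eInfDist y A = 0 :=
  le_antisymm (csInf_le ⟨0, fun _ ⟨_, _, h⟩ => h ▸ Real.sqrt_nonneg _⟩ ⟨y, hy, by simp⟩)
    (eInfDist_nonneg y A)

theorem mem_tangentCone_of_frequently_mem {n : ℕ} {A : Set (Fin n → ℝ)} {x z : Fin n → ℝ}
    (h : ∃ᶠ τ in 𝓝[>] (0 : ℝ), x + τ • z ∈ A) : z ∈ tangentCone A x := by
  have hnonneg : ∀ᶠ τ in 𝓝[>] (0 : ℝ), 0 ≤ eInfDist (x + τ • z) A / τ := by
    filter_upwards [self_mem_nhdsWithin] with τ hτ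
    exact div_nonneg (eInfDist_nonneg _ _) (le_of_lt hτ)
  have hzero : ∃ᶠ τ in 𝓝[>] (0 : ℝ), eInfDist (x + τ • z) A / τ ≤ 0 :=
    h.mono fun τ hτ => by rw [eInfDist_eq_zero_of_mem hτ, zero_div]
  exact le_antisymm (liminf_le_of_frequently_le hzero ⟨0, eventually_map.mpr hnonneg⟩)
    (le_liminf_of_le (IsCoboundedUnder.of_frequently_le hzero) hnonneg)

open ReluNet in
/-- If `x ∈ ∂D` and `z` satisfies `W̄(S)·z ≥ 0` for every activation
set `S ∈ S(x)`, then `z` lies in the tangent cone `T_D(x)`. -/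
theorem stmt13 (N : ReluNet) (x : Fin (N.d 0) → ℝ)
    (hx : x ∈ frontier {y : Fin (N.d 0) → ℝ | 0 ≤ N.b y})
    (z : Fin (N.d 0) → ℝ)
    (hz : ∀ S : N.ActSet, x ∈ N.region S → 0 ≤ ∑ k, N.WbarOut S k * z k) :
    z ∈ tangentCone {y : Fin (N.d 0) → ℝ | 0 ≤ N.b y} x := by
  have hbx : 0 ≤ N.b x := (isClosed_le continuous_const N.continuous_b).frontier_subset hx
  obtain ⟨S, hS⟩ := N.exists_frequently_mem_region (𝓝[>] (0 : ℝ)) (fun τ => x + τ • z)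
  have hray : Tendsto (fun τ : ℝ => x + τ • z) (𝓝[>] 0) (𝓝 x) :=
    ((continuous_const.add (continuous_id.smul continuous_const)).tendsto' 0 x
      (by simp)).mono_left nhdsWithin_le_nhds
  have hxS : x ∈ N.region S := (N.isClosed_region S).mem_of_frequently_of_tendsto hS hray
  refine mem_tangentCone_of_frequently_mem ((hS.and_eventually self_mem_nhdsWithin).mono ?_)
  rintro τ ⟨hτS, hτ⟩
  show 0 ≤ N.b (x + τ • z)
  rw [N.b_add_smul_of_mem_region τ hxS hτS]
  exact add_nonneg hbx (mul_nonneg (le_of_lt hτ) (hz S hxS))
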